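/- Rewriting with a rewritten equation: Let u ≃ w and l ≃ r be equations, and suppose the equation e′ is obtained from l ≃ r by a single Rw inference with u ≃ w (replacing an instance of u occurring in l or in r by the corresponding instance of w). If a clause D is obtained from a clause C by a single Rw inference with e′, then D can be obtained from C by at most two Rw inferences using only the equations l ≃ r and u ≃ w. -/
import Mathlib


namespace RewInd

/-- First-order terms over variables `V` and function symbols `F`. -/
inductive Trm (V F : Type) : Type
  | var : V → Trm V F
  | app : F → List (Trm V F) → Trm V F

variable {V F : Type}

/-- A substitution maps variables to terms. -/
abbrev Subst (V F : Type) := V → Trm V F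

namespace Trm

/-- Apply a substitution homomorphically to a term. -/
def subst (θ : Subst V F) : Trm V F → Trm V F
  | var v => θ v
  | app f ts => app f (ts.attach.map fun t => subst θ t.1)
  decreasing_by
    have := List.sizeOf_lt_of_mem t.2
    simp only [Trm.app.sizeOf_spec]
    omega

/-- A term is ground if it contains no variables. -/
inductive Ground : Trm V F → Prop
  | app {f : F} {ts : List (Trm V F)} : (∀ t ∈ ts, Ground t) → Ground (app f ts)

/-- Whether a term is a variable. -/
def isVar : Trm V F → Prop
  | var _ => True
  | app _ _ => False

/-- The multiset of variable occurrences of a term. -/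
def varsM : Trm V F → Multiset V
  | var v => {v}
  | app _ ts => (ts.attach.map fun t => varsM t.1).sum
  decreasing_by
    have := List.sizeOf_lt_of_mem t.2
    simp only [Trm.app.sizeOf_spec]
    omega

end Trm

/-- Composition of substitutions: apply `θ` first, then `η`. -/
def Subst.comp (θ η : Subst V F) : Subst V F := fun v => (θ v).subst η

/-- The substitution replacing only the variable `x` by the term `t`. -/
def Subst.single [DecidableEq V] (x : V) (t : Trm V F) : Subst V F :=
  fun v => if v = x then t else Trm.var v

/-- Positions: finite sequences of argument indices addressing subterm occurrences. -/
abbrev Pos := List ℕ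

/-- `PosLeft p q` (`p <ₗ q`): position `p` is to the left of position `q`. -/
def PosLeft (p q : Pos) : Prop :=
  ∃ (r : Pos) (i j : ℕ) (p' q' : Pos), i < j ∧ p = r ++ i :: p' ∧ q = r ++ j :: q'

namespace Trm

/-- `SubtermAt t p s`: the term `t` has the subterm `s` at position `p`. -/
inductive SubtermAt : Trm V F → Pos → Trm V F → Prop
  | here (t : Trm V F) : SubtermAt t [] t
  | app {f : F} {ts : List (Trm V F)} {i : ℕ} {t s : Trm V F} {p : Pos} :
      ts[i]? = some t → SubtermAt t p s → SubtermAt (app f ts) (i :: p) s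

/-- `s` is a subterm of `t` (`s ⊴ t`). -/
def Subterm (s t : Trm V F) : Prop := ∃ p, SubtermAt t p s

/-- `s` is a strict subterm of `t` (`s ◁ t`). -/
def StrictSubterm (s t : Trm V F) : Prop := ∃ p, p ≠ [] ∧ SubtermAt t p s

/-- `ReplP a b p s t`: the term `s` has an occurrence of `a` at position `p`, and `t` is
the result of replacing this occurrence by `b`. -/
inductive ReplP (a b : Trm V F) : Pos → Trm V F → Trm V F → Prop
  | here : ReplP a b [] a b
  | app {f : F} {ts : List (Trm V F)} {i : ℕ} {t t' : Trm V F} {p : Pos} :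
      ts[i]? = some t → ReplP a b p t t' →
      ReplP a b (i :: p) (app f ts) (app f (ts.set i t'))

/-- `t` is obtained from `s` by replacing one occurrence of `a` by `b`. -/
def Repl (a b s t : Trm V F) : Prop := ∃ p, ReplP a b p s t

end Trm

/-- Literals: equations `s ≃ t` and disequations `s ≄ t`. -/
inductive Lit (V F : Type) : Type
  | pos : Trm V F → Trm V F → Lit V F
  | neg : Trm V F → Trm V F → Lit V F

namespace Lit

def subst (θ : Subst V F) : Lit V F → Lit V F
  | pos s t => pos (s.subst θ) (t.subst θ)
  | neg s t => neg (s.subst θ) (t.subst θ)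

/-- The complement of a literal. -/
def compl : Lit V F → Lit V F
  | pos s t => neg s t
  | neg s t => pos s t

def Ground : Lit V F → Prop
  | pos s t => s.Ground ∧ t.Ground
  | neg s t => s.Ground ∧ t.Ground

def varsM : Lit V F → Multiset V
  | pos s t => s.varsM + t.varsM
  | neg s t => s.varsM + t.varsM

/-- The literal with polarity `b` (`true` = equation, `false` = disequation) and sides `s`, `t`. -/
def sided (b : Bool) (s t : Trm V F) : Lit V F := if b then pos s t else neg s t

/-- `L` is the literal `s ⋈ t` of polarity `b`, where (dis)equations are symmetric in their
two sides. -/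
def HasShape (L : Lit V F) (b : Bool) (s t : Trm V F) : Prop :=
  L = sided b s t ∨ L = sided b t s

/-- Replacement of one occurrence of `a` by `b` at a position inside a literal:
position `0` addresses the left-hand side, position `1` the right-hand side. -/
inductive ReplP (a b : Trm V F) : Pos → Lit V F → Lit V F → Prop
  | posL {s s' t : Trm V F} {p : Pos} :
      Trm.ReplP a b p s s' → ReplP a b (0 :: p) (pos s t) (pos s' t)
  | posR {s t t' : Trm V F} {p : Pos} :
      Trm.ReplP a b p t t' → ReplP a b (1 :: p) (pos s t) (pos s t')
  | negL {s s' t : Trm V F} {p : Pos} :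
      Trm.ReplP a b p s s' → ReplP a b (0 :: p) (neg s t) (neg s' t)
  | negR {s t t' : Trm V F} {p : Pos} :
      Trm.ReplP a b p t t' → ReplP a b (1 :: p) (neg s t) (neg s t')

def Repl (a b : Trm V F) (L L' : Lit V F) : Prop := ∃ p, ReplP a b p L L'

/-- `SubtermAt L p u`: the literal `L` has the subterm `u` at position `p`. -/
inductive SubtermAt : Lit V F → Pos → Trm V F → Prop
  | posL {s t u : Trm V F} {p : Pos} : Trm.SubtermAt s p u → SubtermAt (pos s t) (0 :: p) u
  | posR {s t u : Trm V F} {p : Pos} : Trm.SubtermAt t p u → SubtermAt (pos s t) (1 :: p) u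
  | negL {s t u : Trm V F} {p : Pos} : Trm.SubtermAt s p u → SubtermAt (neg s t) (0 :: p) u
  | negR {s t u : Trm V F} {p : Pos} : Trm.SubtermAt t p u → SubtermAt (neg s t) (1 :: p) u

end Lit

/-- Clauses are finite multisets of literals. -/
abbrev Clause (V F : Type) := Multiset (Lit V F)

namespace Clause

def subst (θ : Subst V F) (C : Clause V F) : Clause V F := C.map (Lit.subst θ)

def Ground (C : Clause V F) : Prop := ∀ L ∈ C, L.Ground

def varsM (C : Clause V F) : Multiset V := (C.map Lit.varsM).sum

/-- `ReplP a b q C D`: the clause `D` is obtained from `C` by replacing one occurrence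
of `a` at clause position `q` by `b` (the head of `q` addresses a literal of the clause). -/
def ReplP (a b : Trm V F) (q : Pos) (C D : Clause V F) : Prop :=
  ∃ (ls : List (Lit V F)) (i : ℕ) (L L' : Lit V F) (p : Pos),
    q = i :: p ∧ C = (ls : Multiset (Lit V F)) ∧ ls[i]? = some L ∧
    Lit.ReplP a b p L L' ∧ D = ((ls.set i L' : List (Lit V F)) : Multiset (Lit V F))

/-- `D` is obtained from `C` by replacing one occurrence of `a` by `b`. -/
def Repl (a b : Trm V F) (C D : Clause V F) : Prop := ∃ q, ReplP a b q C D

end Clause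

/-- The unit clause `l ≃ r`. -/
def eqn (l r : Trm V F) : Clause V F := {Lit.pos l r}

/-- `E` is the equation `l ≃ r`; equations are symmetric in their sides. -/
def IsEqnOf (E : Clause V F) (l r : Trm V F) : Prop := E = eqn l r ∨ E = eqn r l

/-- `E` is a (unit) equation. -/
def IsEqn (E : Clause V F) : Prop := ∃ l r, E = eqn l r

/-- The (Dershowitz–Manna) multiset extension of an ordering: `N` is greater than `M`. -/
def MulExt {α : Type*} (r : α → α → Prop) (N M : Multiset α) : Prop :=
  ∃ X Y Z, N = Z + Y ∧ M = Z + X ∧ Y ≠ 0 ∧ ∀ x ∈ X, ∃ y ∈ Y, r y x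

/-- Encoding of a literal as a multiset of terms, for the ordering extension. -/
def Lit.ms : Lit V F → Multiset (Trm V F)
  | .pos s t => {s, t}
  | .neg s t => {s, s, t, t}

/-- Extension of the term ordering to literals. -/
def LitGT (succ : Trm V F → Trm V F → Prop) (L M : Lit V F) : Prop := MulExt succ L.ms M.ms

/-- Extension of the term ordering to clauses. -/
def ClauseGT (succ : Trm V F → Trm V F → Prop) (C D : Clause V F) : Prop :=
  MulExt (LitGT succ) C D

/-- `a ⪰ b`. -/
def SuccEq (succ : Trm V F → Trm V F → Prop) (a b : Trm V F) : Prop := succ a b ∨ a = b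

/-- `succ` is a simplification ordering (total on ground terms). -/
structure SimpOrd (succ : Trm V F → Trm V F → Prop) : Prop where
  trans : ∀ {a b c : Trm V F}, succ a b → succ b c → succ a c
  irrefl : ∀ a : Trm V F, ¬ succ a a
  wf : WellFounded fun a b : Trm V F => succ b a
  total_ground : ∀ {s t : Trm V F}, s.Ground → t.Ground → succ s t ∨ s = t ∨ succ t s
  subst_mono : ∀ {l r : Trm V F} (θ : Subst V F), succ l r → succ (l.subst θ) (r.subst θ)
  ctx_mono : ∀ {l r s s' : Trm V F} {p : Pos}, succ l r → Trm.ReplP l r p s s' → succ s s'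

/-- `θ` is a unifier of `s` and `t`. -/
def IsUnifier (θ : Subst V F) (s t : Trm V F) : Prop := s.subst θ = t.subst θ

/-- `θ` is a most general unifier of `s` and `t`. -/
def IsMGU (θ : Subst V F) (s t : Trm V F) : Prop :=
  IsUnifier θ s t ∧ ∀ η, IsUnifier η s t → ∃ μ, ∀ v, η v = (θ v).subst μ

/-- The superposition calculus `Sup` (rules Sup, EqRes, EqFac). -/
inductive SupInf (succ : Trm V F → Trm V F → Prop) : List (Clause V F) → Clause V F → Prop
  | sup {C D C' D' : Clause V F} {L M : Lit V F} {b : Bool} {s t u l r s' : Trm V F}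
      {p : Pos} {θ : Subst V F} :
      C = L ::ₘ C' → L.HasShape b s t →
      D = M ::ₘ D' → M.HasShape true l r →
      ¬ u.isVar → Trm.ReplP u r p s s' → IsMGU θ l u →
      ¬ SuccEq succ (r.subst θ) (l.subst θ) → ¬ SuccEq succ (t.subst θ) (s.subst θ) →
      SupInf succ [C, D] (Clause.subst θ (Lit.sided b s' t ::ₘ (C' + D')))
  | eqres {C C' : Clause V F} {L : Lit V F} {s t : Trm V F} {θ : Subst V F} :
      C = L ::ₘ C' → L.HasShape false s t → IsMGU θ s t →
      SupInf succ [C] (Clause.subst θ C')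
  | eqfac {C C' : Clause V F} {L M : Lit V F} {s t u w : Trm V F} {θ : Subst V F} :
      C = L ::ₘ M ::ₘ C' → L.HasShape true s t → M.HasShape true u w → IsMGU θ s u →
      ¬ SuccEq succ (t.subst θ) (s.subst θ) → ¬ SuccEq succ (w.subst θ) (t.subst θ) →
      SupInf succ [C] (Clause.subst θ (Lit.sided true s t ::ₘ Lit.sided false t w ::ₘ C'))

/-- The unconstrained rewriting rule (Rw): from `C[lθ]` and `l ≃ r` derive `C[lθ ↦ rθ]`. -/
def RwInf : List (Clause V F) → Clause V F → Prop := fun Ps D =>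
  ∃ (C E : Clause V F) (l r : Trm V F) (θ : Subst V F),
    Ps = [C, E] ∧ IsEqnOf E l r ∧ Clause.Repl (l.subst θ) (r.subst θ) C D

/-- Derivability of a clause from a set of clauses in an inference system given as a
relation between lists of premises and conclusions. -/
inductive Derives {α : Type*} (I : List α → α → Prop) (S : Set α) : α → Prop
  | ax {C} : C ∈ S → Derives I S C
  | inf {Ps C} : (∀ P ∈ Ps, Derives I S P) → I Ps C → Derives I S C

/-- An inference system admits equational derivability (ED). -/
def AdmitsED (I : List (Clause V F) → Clause V F → Prop) : Prop :=
  ∀ S : Set (Clause V F), (∀ C ∈ S, IsEqn C) →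
    ∀ (l r : Trm V F) (θ : Subst V F) (D D' : Clause V F),
      Derives I S D → Clause.Repl (l.subst θ) (r.subst θ) D D' →
      Derives I (S ∪ {eqn l r}) D'

/-- One Rw rewriting step with the (symmetric) equation `l ≃ r`. -/
def RwWith (l r : Trm V F) (X Y : Clause V F) : Prop :=
  ∃ θ : Subst V F,
    Clause.Repl (l.subst θ) (r.subst θ) X Y ∨ Clause.Repl (r.subst θ) (l.subst θ) X Y


/-! ### Auxiliary lemmas -/

private theorem list_set_getElem? {α : Type*} :
    ∀ (l : List α) (i : ℕ) (a : α), l[i]? = some a → l.set i a = l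
  | [], _, _, h => by simp at h
  | x :: l, 0, a, h => by simp_all
  | x :: l, i + 1, a, h => by
      simp only [List.getElem?_cons_succ] at h
      simp [list_set_getElem? l i a h]

theorem Trm.subst_app (θ : Subst V F) (f : F) (ts : List (Trm V F)) :
    (Trm.app f ts).subst θ = Trm.app f (ts.map (Trm.subst θ)) := by
  rw [Trm.subst, List.attach_map_val]

theorem Trm.subst_subst (θ η : Subst V F) :
    ∀ t : Trm V F, (t.subst θ).subst η = t.subst (Subst.comp θ η)
  | .var v => by simp [Trm.subst, Subst.comp]
  | .app f ts => by
      rw [Trm.subst_app, Trm.subst_app, Trm.subst_app, List.map_map]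
      congr 1
      apply List.map_congr_left
      intro t ht
      exact Trm.subst_subst θ η t
termination_by t => sizeOf t
decreasing_by
  have := List.sizeOf_lt_of_mem ht
  simp only [Trm.app.sizeOf_spec]
  omega

theorem Trm.ReplP.subst_repl {a b s t : Trm V F} {p : Pos} (θ : Subst V F)
    (h : Trm.ReplP a b p s t) :
    Trm.ReplP (a.subst θ) (b.subst θ) p (s.subst θ) (t.subst θ) := by
  induction h with
  | here => exact .here
  | @app f ts i t t' p hget hrep ih =>
      rw [Trm.subst_app, Trm.subst_app, List.map_set]
      exact .app (by rw [List.getElem?_map, hget]; rfl) ih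

theorem Trm.ReplP.symm {a b s t : Trm V F} {p : Pos} (h : Trm.ReplP a b p s t) :
    Trm.ReplP b a p t s := by
  induction h with
  | here => exact .here
  | @app f ts i t t' p hget hrep ih =>
      have hlen : i < ts.length := (List.getElem?_eq_some_iff.1 hget).1
      have h2 : Trm.ReplP b a (i :: p) (Trm.app f (ts.set i t'))
          (Trm.app f ((ts.set i t').set i t)) :=
        .app (List.getElem?_set_self (by simpa using hlen)) ih
      rwa [List.set_set, list_set_getElem? ts i t hget] at h2

theorem Trm.ReplP.mid {a b s s' : Trm V F} {p : Pos} (h : Trm.ReplP a b p s s')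
    (c : Trm V F) : ∃ m, Trm.ReplP a c p s m ∧ Trm.ReplP c b p m s' := by
  induction h with
  | here => exact ⟨c, .here, .here⟩
  | @app f ts i t t' p hget hrep ih =>
      obtain ⟨m, h1, h2⟩ := ih
      have hlen : i < ts.length := (List.getElem?_eq_some_iff.1 hget).1
      refine ⟨Trm.app f (ts.set i m), .app hget h1, ?_⟩
      have h3 : Trm.ReplP c b (i :: p) (Trm.app f (ts.set i m))
          (Trm.app f ((ts.set i m).set i t')) :=
        .app (List.getElem?_set_self (by simpa using hlen)) h2
      rwa [List.set_set] at h3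

theorem Trm.ReplP.trans_pos {A B a b : Trm V F} {pa p : Pos} {s s' : Trm V F}
    (h1 : Trm.ReplP A B pa s s') (h2 : Trm.ReplP a b p A B) :
    Trm.ReplP a b (pa ++ p) s s' := by
  induction h1 with
  | here => exact h2
  | app hget _ ih => exact .app hget ih

theorem Lit.ReplP.symm {a b : Trm V F} {p : Pos} {L L' : Lit V F}
    (h : Lit.ReplP a b p L L') : Lit.ReplP b a p L' L := by
  cases h with
  | posL h => exact .posL h.symm
  | posR h => exact .posR h.symm
  | negL h => exact .negL h.symm
  | negR h => exact .negR h.symm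

theorem Lit.ReplP.mid {a b : Trm V F} {p : Pos} {L L' : Lit V F}
    (h : Lit.ReplP a b p L L') (c : Trm V F) :
    ∃ M, Lit.ReplP a c p L M ∧ Lit.ReplP c b p M L' := by
  cases h with
  | posL h => obtain ⟨m, h1, h2⟩ := h.mid c; exact ⟨_, .posL h1, .posL h2⟩
  | posR h => obtain ⟨m, h1, h2⟩ := h.mid c; exact ⟨_, .posR h1, .posR h2⟩
  | negL h => obtain ⟨m, h1, h2⟩ := h.mid c; exact ⟨_, .negL h1, .negL h2⟩
  | negR h => obtain ⟨m, h1, h2⟩ := h.mid c; exact ⟨_, .negR h1, .negR h2⟩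

theorem Lit.ReplP.trans_pos {A B a b : Trm V F} {p0 p : Pos} {L L' : Lit V F}
    (h1 : Lit.ReplP A B p0 L L') (h2 : Trm.ReplP a b p A B) :
    Lit.ReplP a b (p0 ++ p) L L' := by
  cases h1 with
  | posL h => exact .posL (h.trans_pos h2)
  | posR h => exact .posR (h.trans_pos h2)
  | negL h => exact .negL (h.trans_pos h2)
  | negR h => exact .negR (h.trans_pos h2)

theorem Clause.ReplP.symm {a b : Trm V F} {q : Pos} {C D : Clause V F}
    (h : Clause.ReplP a b q C D) : Clause.ReplP b a q D C := by
  obtain ⟨ls, i, L, L', p, hq, hC, hget, hrep, hD⟩ := h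
  have hlen : i < ls.length := (List.getElem?_eq_some_iff.1 hget).1
  refine ⟨ls.set i L', i, L', L, p, hq, hD, List.getElem?_set_self (by simpa using hlen),
    hrep.symm, ?_⟩
  rw [List.set_set, list_set_getElem? ls i L hget, hC]

/-- Core splitting lemma: if `x₁` is obtained from `x` by replacing `a` with `b`, and `D` is
obtained from `C` by replacing an occurrence of `x₁θ` by `yθ`, then we can first undo the
inner rewrite (replacing `bθ` by `aθ`) to get `M`, and then rewrite `xθ` to `yθ`. -/
theorem clause_core {a b x x₁ y : Trm V F} {p : Pos} {θ : Subst V F} {q : Pos}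
    {C D : Clause V F}
    (hx : Trm.ReplP a b p x x₁)
    (h : Clause.ReplP (x₁.subst θ) (y.subst θ) q C D) :
    ∃ M : Clause V F, (∃ q', Clause.ReplP (b.subst θ) (a.subst θ) q' C M) ∧
      Clause.ReplP (x.subst θ) (y.subst θ) q M D := by
  obtain ⟨ls, i, L, L', p0, hq, hC, hget, hrep, hD⟩ := h
  obtain ⟨L'', h1, h2⟩ := hrep.mid (x.subst θ)
  have hx' : Trm.ReplP (b.subst θ) (a.subst θ) p (x₁.subst θ) (x.subst θ) :=
    hx.symm.subst_repl θ
  have hA : Lit.ReplP (b.subst θ) (a.subst θ) (p0 ++ p) L L'' := h1.trans_pos hx'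
  have hlen : i < ls.length := (List.getElem?_eq_some_iff.1 hget).1
  refine ⟨((ls.set i L'' : List (Lit V F)) : Multiset (Lit V F)),
    ⟨i :: (p0 ++ p), ls, i, L, L'', p0 ++ p, rfl, hC, hget, hA, rfl⟩,
    ls.set i L'', i, L'', L', p0, hq, rfl,
    List.getElem?_set_self (by simpa using hlen), h2, ?_⟩
  rw [hD, List.set_set]


theorem main_aux {u w l r : Trm V F} {e' C D : Clause V F} {A B : Trm V F} {θ₀ : Subst V F}
    (hA : (A = Trm.subst θ₀ u ∧ B = Trm.subst θ₀ w) ∨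
          (A = Trm.subst θ₀ w ∧ B = Trm.subst θ₀ u))
    (h0 : Clause.Repl A B (eqn l r) e')
    (hCD : ∃ (l'' r'' : Trm V F) (θ : Subst V F),
      IsEqnOf e' l'' r'' ∧ Clause.Repl (l''.subst θ) (r''.subst θ) C D) :
    ∃ M : Clause V F,
      (RwWith l r C M ∨ RwWith u w C M) ∧ (RwWith l r M D ∨ RwWith u w M D) := by
  obtain ⟨l'', r'', θ, hEq, q, hRepl⟩ := hCD
  have huw : ∀ (X Y : Clause V F) (q' : Pos),
      (Clause.ReplP (Trm.subst θ A) (Trm.subst θ B) q' X Y ∨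
       Clause.ReplP (Trm.subst θ B) (Trm.subst θ A) q' X Y) → RwWith u w X Y := by
    intro X Y q' h
    refine ⟨Subst.comp θ₀ θ, ?_⟩
    rw [← Trm.subst_subst, ← Trm.subst_subst]
    rcases hA with ⟨rfl, rfl⟩ | ⟨rfl, rfl⟩
    · exact h.imp (fun h => ⟨q', h⟩) (fun h => ⟨q', h⟩)
    · exact h.symm.imp (fun h => ⟨q', h⟩) (fun h => ⟨q', h⟩)
  obtain ⟨q0, ls, i, L, L', p0, hq0, hE, hget, hrep, hE'⟩ := h0
  have hls : ls = [Lit.pos l r] := by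
    have h := hE.symm
    simp only [eqn] at h
    exact Multiset.coe_eq_singleton.mp h
  subst hls
  have hi : i = 0 := by
    cases i with
    | zero => rfl
    | succ n => simp at hget
  subst hi
  simp only [List.getElem?_cons_zero, Option.some.injEq] at hget
  subst hget
  simp only [List.set_cons_zero] at hE'
  have hL' : L' = Lit.pos l'' r'' ∨ L' = Lit.pos r'' l'' := by
    rcases hEq with h | h
    · left
      have h2 : (([L'] : List (Lit V F)) : Multiset (Lit V F)) = {Lit.pos l'' r''} := by
        rw [← hE', h]; rfl
      rw [Multiset.coe_singleton, Multiset.singleton_inj] at h2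
      exact h2
    · right
      have h2 : (([L'] : List (Lit V F)) : Multiset (Lit V F)) = {Lit.pos r'' l''} := by
        rw [← hE', h]; rfl
      rw [Multiset.coe_singleton, Multiset.singleton_inj] at h2
      exact h2
  cases hrep with
  | @posL s s' t p h =>
      rcases hL' with h' | h'
      · obtain ⟨rfl, rfl⟩ : s' = l'' ∧ r = r'' := by
          cases h'; exact ⟨rfl, rfl⟩
        obtain ⟨M, ⟨q', hAstep⟩, hBstep⟩ := clause_core h hRepl
        exact ⟨M, Or.inr (huw C M q' (Or.inr hAstep)),
          Or.inl ⟨θ, Or.inl ⟨q, hBstep⟩⟩⟩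
      · obtain ⟨rfl, rfl⟩ : s' = r'' ∧ r = l'' := by
          cases h'; exact ⟨rfl, rfl⟩
        obtain ⟨M, ⟨q', hAstep⟩, hBstep⟩ := clause_core h hRepl.symm
        exact ⟨M, Or.inl ⟨θ, Or.inr ⟨q, hBstep.symm⟩⟩,
          Or.inr (huw M D q' (Or.inl hAstep.symm))⟩
  | @posR s t t' p h =>
      rcases hL' with h' | h'
      · obtain ⟨rfl, rfl⟩ : l = l'' ∧ t' = r'' := by
          cases h'; exact ⟨rfl, rfl⟩
        obtain ⟨M, ⟨q', hAstep⟩, hBstep⟩ := clause_core h hRepl.symm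
        exact ⟨M, Or.inl ⟨θ, Or.inl ⟨q, hBstep.symm⟩⟩,
          Or.inr (huw M D q' (Or.inl hAstep.symm))⟩
      · obtain ⟨rfl, rfl⟩ : t' = l'' ∧ l = r'' := by
          cases h'; exact ⟨rfl, rfl⟩
        obtain ⟨M, ⟨q', hAstep⟩, hBstep⟩ := clause_core h hRepl
        exact ⟨M, Or.inr (huw C M q' (Or.inr hAstep)),
          Or.inl ⟨θ, Or.inr ⟨q, hBstep⟩⟩⟩

/-- **Rewriting with a rewritten equation.**
Let `u ≃ w` and `l ≃ r` be equations, and let the equation `e'` be obtained from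
`l ≃ r` by a single Rw inference with `u ≃ w`.  If a clause `D` is obtained from a
clause `C` by a single Rw inference with `e'`, then `D` can be obtained from `C` by at
most two Rw inferences using only the equations `l ≃ r` and `u ≃ w`. -/
theorem rw_with_rewritten_equation {V F : Type}
    (u w l r : Trm V F) (e' C D : Clause V F)
    (he' : RwWith u w (eqn l r) e')
    (hCD : ∃ (l' r' : Trm V F) (θ : Subst V F),
      IsEqnOf e' l' r' ∧ Clause.Repl (l'.subst θ) (r'.subst θ) C D) :
    C = D ∨ (RwWith l r C D ∨ RwWith u w C D) ∨
      ∃ M : Clause V F,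
        (RwWith l r C M ∨ RwWith u w C M) ∧ (RwWith l r M D ∨ RwWith u w M D) := by
  refine Or.inr (Or.inr ?_)
  obtain ⟨θ₀, h0 | h0⟩ := he'
  · exact main_aux (Or.inl ⟨rfl, rfl⟩) h0 hCD
  · exact main_aux (Or.inr ⟨rfl, rfl⟩) h0 hCD

end RewInd
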